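/- Let (X,μ) be a non-atomic probability measure space, T a tree on X, M_T the associated maximal operator, and p > 1. Then for every f, F with 0 < f ≤ F, sup{ ||M_T φ||_{p,∞} : φ ≥ 0 measurable, ∫_X φ dμ = f, |||φ|||_{p,∞} = F } = F. -/

import Mathlib

/-!
The upper bound is a weak-type estimate: the level set `{M_T φ > l}` is covered by the maximal
tree elements on which the average of `|φ|` exceeds `l`; these are almost disjoint, so their union
`U` satisfies `l μ(U) ≤ ∫_U |φ|`, whence `l μ(U)^{1/p} ≤ |||φ|||_{p,∞}`.

For the lower bound take `φ = (f / a) 1_A` with `μ(A) = a = (f / F)^{p'}`, so that `∫ φ = f` and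
`|||φ|||_{p,∞} = F`. By non-atomicity `A` can be spread evenly over a finite family of elements of
a deep level of the tree whose total measure `s` is slightly larger than `a`; on their union
`M_T φ ≥ f / s`, so `‖M_T φ‖_{p,∞} ≥ f s^{-1/p'}`, which tends to `F` as `s` decreases to `a`.
-/

open MeasureTheory Set Filter ENNReal

/-- A measure is non-atomic if every measurable set of positive measure contains a
measurable subset of strictly smaller positive measure. -/
def Nonatomic {X : Type*} [MeasurableSpace X] (μ : Measure X) : Prop :=
  ∀ A : Set X, MeasurableSet A → 0 < μ A →
    ∃ B, B ⊆ A ∧ MeasurableSet B ∧ 0 < μ B ∧ μ B < μ A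

/-- A tree on a probability measure space, in the sense of Melas. -/
structure TreeOn (X : Type*) [MeasurableSpace X] (μ : MeasureTheory.Measure X) where
  carrier : Set (Set X)
  child : Set X → Set (Set X)
  level : ℕ → Set (Set X)
  univ_mem : Set.univ ∈ carrier
  meas : ∀ I ∈ carrier, MeasurableSet I
  pos : ∀ I ∈ carrier, 0 < μ I
  child_subset_carrier : ∀ I ∈ carrier, child I ⊆ carrier
  child_finite : ∀ I ∈ carrier, (child I).Finite
  child_two : ∀ I ∈ carrier, ∃ J ∈ child I, ∃ K ∈ child I, J ≠ K
  child_sub : ∀ I ∈ carrier, ∀ J ∈ child I, J ⊆ I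
  child_almost_disjoint : ∀ I ∈ carrier, ∀ J ∈ child I, ∀ K ∈ child I, J ≠ K → μ (J ∩ K) = 0
  child_union : ∀ I ∈ carrier, ⋃₀ child I = I
  level_zero : level 0 = {Set.univ}
  level_succ : ∀ m, level (m + 1) = ⋃ I ∈ level m, child I
  carrier_eq : carrier = ⋃ m, level m
  level_tendsto : Filter.Tendsto (fun m => ⨆ I ∈ level m, μ I) Filter.atTop (nhds 0)

/-- The maximal operator associated to a tree `T`:
`M_T φ (x) = sup { (1/μ I) ∫_I |φ| dμ : x ∈ I, I ∈ T }`. -/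
noncomputable def maxT {X : Type*} [MeasurableSpace X] (μ : MeasureTheory.Measure X)
    (T : TreeOn X μ) (φ : X → ℝ) (x : X) : ℝ≥0∞ :=
  ⨆ (I : Set X) (_ : I ∈ T.carrier) (_ : x ∈ I),
    (∫⁻ y in I, ENNReal.ofReal |φ y| ∂μ) / μ I

/-- The norm `|||φ|||_{p,∞} = sup { μ(E)^{-1+1/p} ∫_E |φ| dμ : E measurable, μ E > 0 }`. -/
noncomputable def tripleNorm {X : Type*} [MeasurableSpace X] (μ : MeasureTheory.Measure X)
    (p : ℝ) (φ : X → ℝ) : ℝ≥0∞ :=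
  ⨆ (E : Set X) (_ : MeasurableSet E) (_ : 0 < μ E),
    μ E ^ (-1 + 1/p) * ∫⁻ x in E, ENNReal.ofReal |φ x| ∂μ

/-- The standard quasi-norm `‖φ‖_{p,∞} = sup { λ · μ({|φ| > λ})^{1/p} : λ > 0 }`. -/
noncomputable def weakNorm {X : Type*} [MeasurableSpace X] (μ : MeasureTheory.Measure X)
    (p : ℝ) (φ : X → ℝ) : ℝ≥0∞ :=
  ⨆ (l : ℝ) (_ : 0 < l), ENNReal.ofReal l * μ {x | l < |φ x|} ^ (1/p)

/-- The standard quasi-norm for an `ℝ≥0∞`-valued function (such as `maxT μ T φ`). -/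
noncomputable def weakNormE {X : Type*} [MeasurableSpace X] (μ : MeasureTheory.Measure X)
    (p : ℝ) (g : X → ℝ≥0∞) : ℝ≥0∞ :=
  ⨆ (l : ℝ) (_ : 0 < l), ENNReal.ofReal l * μ {x | ENNReal.ofReal l < g x} ^ (1/p)

section Nonatomic

variable {X : Type*} [MeasurableSpace X] {μ : Measure X} [IsFiniteMeasure μ]

lemma Nonatomic.exists_subset_measure_le_half (hna : Nonatomic μ) {A : Set X}
    (hA : MeasurableSet A) (hA₀ : 0 < μ A) :
    ∃ B ⊆ A, MeasurableSet B ∧ 0 < μ B ∧ μ B ≤ μ A / 2 := by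
  obtain ⟨C, hCA, hC, hC₀, hCA'⟩ := hna A hA hA₀
  have hdiff : μ (A \ C) = μ A - μ C :=
    measure_sdiff hCA hC.nullMeasurableSet (measure_ne_top μ C)
  by_cases hCle : μ C ≤ μ A / 2
  · exact ⟨C, hCA, hC, hC₀, hCle⟩
  refine ⟨A \ C, sdiff_subset, hA.diff hC, by rw [hdiff]; exact tsub_pos_of_lt hCA', ?_⟩
  rw [hdiff, tsub_le_iff_right]
  calc μ A = μ A / 2 + μ A / 2 := (ENNReal.add_halves _).symm
    _ ≤ μ A / 2 + μ C := add_le_add_right (not_le.mp hCle).le _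

lemma Nonatomic.exists_subset_measure_le_mul_inv_two_pow (hna : Nonatomic μ) (n : ℕ) {A : Set X}
    (hA : MeasurableSet A) (hA₀ : 0 < μ A) :
    ∃ B ⊆ A, MeasurableSet B ∧ 0 < μ B ∧ μ B ≤ μ A * 2⁻¹ ^ n := by
  induction n with
  | zero => exact ⟨A, subset_rfl, hA, hA₀, by simp⟩
  | succ n ih =>
    obtain ⟨B, hBA, hB, hB₀, hBle⟩ := ih
    obtain ⟨C, hCB, hC, hC₀, hCle⟩ := hna.exists_subset_measure_le_half hB hB₀
    refine ⟨C, hCB.trans hBA, hC, hC₀, ?_⟩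
    calc μ C ≤ μ B * 2⁻¹ := by rwa [← div_eq_mul_inv]
      _ ≤ μ A * 2⁻¹ ^ n * 2⁻¹ := mul_le_mul_left hBle _
      _ = μ A * 2⁻¹ ^ (n + 1) := by rw [pow_succ, mul_assoc]

lemma Nonatomic.exists_subset_measure_le (hna : Nonatomic μ) {A : Set X}
    (hA : MeasurableSet A) (hA₀ : 0 < μ A) {ε : ℝ≥0∞} (hε : ε ≠ 0) :
    ∃ B ⊆ A, MeasurableSet B ∧ 0 < μ B ∧ μ B ≤ ε := by
  obtain ⟨n, hn⟩ := ENNReal.exists_inv_two_pow_lt (ENNReal.div_pos hε (measure_ne_top μ A)).ne'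
  obtain ⟨B, hBA, hB, hB₀, hBle⟩ := hna.exists_subset_measure_le_mul_inv_two_pow n hA hA₀
  refine ⟨B, hBA, hB, hB₀, hBle.trans ?_⟩
  calc μ A * 2⁻¹ ^ n ≤ μ A * (ε / μ A) := mul_le_mul_right hn.le _
    _ = ε := ENNReal.mul_div_cancel hA₀.ne' (measure_ne_top μ A)

lemma exists_subset_measure_le_forall_le_two_mul (D : Set X) (d : ℝ≥0∞) :
    ∃ B ⊆ D, MeasurableSet B ∧ μ B ≤ d ∧
      ∀ B' ⊆ D, MeasurableSet B' → μ B' ≤ d → μ B' ≤ 2 * μ B := by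
  set c := ⨆ (B' : Set X) (_ : B' ⊆ D) (_ : MeasurableSet B') (_ : μ B' ≤ d), μ B'
  have hle : ∀ B' ⊆ D, MeasurableSet B' → μ B' ≤ d → μ B' ≤ c := fun B' h₁ h₂ h₃ =>
    le_iSup_of_le B' (le_iSup_of_le h₁ (le_iSup_of_le h₂ (le_iSup_of_le h₃ le_rfl)))
  rcases eq_or_ne c 0 with hc | hc
  · exact ⟨∅, empty_subset _, .empty, by simp, fun B' h₁ h₂ h₃ => (hle B' h₁ h₂ h₃).trans
      (by simp [hc])⟩
  have hc_top : c ≠ ⊤ := ne_top_of_le_ne_top (measure_ne_top μ D)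
    (iSup₂_le fun B' h₁ => iSup₂_le fun _ _ => measure_mono h₁)
  obtain ⟨B, hBD, hB, hBd, hcB⟩ : ∃ B ⊆ D, MeasurableSet B ∧ μ B ≤ d ∧ c / 2 < μ B := by
    have := ENNReal.half_lt_self hc hc_top
    simpa only [c, lt_iSup_iff, exists_prop] using this
  refine ⟨B, hBD, hB, hBd, fun B' h₁ h₂ h₃ => (hle B' h₁ h₂ h₃).trans ?_⟩
  calc c = 2 * (c / 2) := (ENNReal.mul_div_cancel two_ne_zero ofNat_ne_top).symm
    _ ≤ 2 * μ B := mul_le_mul_right hcB.le _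

/-- Sierpiński's theorem. The subset is built greedily, each step adding at least half of the
largest admissible increment; if the limit fell short of `r`, a small positive piece of the
remainder would force infinitely many increments of size bounded below. -/
theorem Nonatomic.exists_subset_measure_eq (hna : Nonatomic μ) {s : Set X}
    (hs : MeasurableSet s) {r : ℝ≥0∞} (hr : r ≤ μ s) :
    ∃ t ⊆ s, MeasurableSet t ∧ μ t = r := by
  choose B hBs hB hBr hBmax using fun t : Set X =>
    exists_subset_measure_le_forall_le_two_mul (μ := μ) (s \ t) (r - μ t)
  set seq : ℕ → Set X := fun n => (fun t => t ∪ B t)^[n] ∅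
  have hseq_succ (n : ℕ) : seq (n + 1) = seq n ∪ B (seq n) :=
    Function.iterate_succ_apply' _ n ∅
  have hseq (n : ℕ) : seq n ⊆ s ∧ MeasurableSet (seq n) ∧ μ (seq n) ≤ r := by
    induction n with
    | zero => exact ⟨empty_subset s, .empty, by simp [seq]⟩
    | succ n ih =>
      obtain ⟨hns, hn, hnr⟩ := ih
      rw [hseq_succ]
      refine ⟨union_subset hns ((hBs _).trans sdiff_subset), hn.union (hB _), ?_⟩
      calc μ (seq n ∪ B (seq n)) ≤ μ (seq n) + (r - μ (seq n)) :=
            (measure_union_le _ _).trans (add_le_add_right (hBr _) _)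
        _ = r := add_tsub_cancel_of_le hnr
  have hmono : Monotone seq :=
    monotone_nat_of_le_succ fun n => (hseq_succ n).symm ▸ subset_union_left
  set t := ⋃ n, seq n
  have hts : t ⊆ s := iUnion_subset fun n => (hseq n).1
  have ht : MeasurableSet t := .iUnion fun n => (hseq n).2.1
  have htr : μ t ≤ r := by
    rw [hmono.directed_le.measure_iUnion]
    exact iSup_le fun n => (hseq n).2.2
  refine ⟨t, hts, ht, le_antisymm htr (not_lt.mp fun hlt => ?_)⟩
  have hgap : 0 < r - μ t := tsub_pos_of_lt hlt
  obtain ⟨C, hC_sub, hC, hC₀, hCr⟩ := hna.exists_subset_measure_le (hs.diff ht)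
    (by rw [measure_sdiff hts ht.nullMeasurableSet (measure_ne_top μ t)]
        exact hgap.trans_le (tsub_le_tsub_right hr _)) hgap.ne'
  have hgrow (n : ℕ) : μ (seq n) + μ C / 2 ≤ μ (seq (n + 1)) := by
    have hnt : seq n ⊆ t := subset_iUnion seq n
    have hC2 : μ C ≤ 2 * μ (B (seq n)) :=
      hBmax _ C (hC_sub.trans (sdiff_subset_sdiff_right hnt)) hC
        (hCr.trans (tsub_le_tsub_left (measure_mono hnt) r))
    rw [hseq_succ, measure_union (disjoint_sdiff_right.mono_right (hBs _)) (hB _)]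
    exact add_le_add_right (ENNReal.div_le_of_le_mul' hC2) _
  have hlin (n : ℕ) : n * (μ C / 2) ≤ μ (seq n) := by
    induction n with
    | zero => simp
    | succ n ih =>
      calc ((n + 1 : ℕ) : ℝ≥0∞) * (μ C / 2) = n * (μ C / 2) + μ C / 2 := by push_cast; ring
        _ ≤ μ (seq n) + μ C / 2 := add_le_add_left ih _
        _ ≤ μ (seq (n + 1)) := hgrow n
  obtain ⟨n, hn⟩ := ENNReal.exists_nat_mul_gt (ENNReal.div_pos hC₀.ne' (ofNat_ne_top (n := 2))).ne'
    (ne_top_of_le_ne_top (measure_ne_top μ s) hr)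
  exact (hn.trans_le ((hlin n).trans (hseq n).2.2)).false

lemma Nonatomic.exists_measure_inter_ge_mul (hna : Nonatomic μ) {u : Finset (Set X)}
    (hum : ∀ I ∈ u, MeasurableSet I) (hud : (u : Set (Set X)).Pairwise (AEDisjoint μ))
    {θ : ℝ≥0∞} (hθ : θ ≤ 1) :
    ∃ A, MeasurableSet A ∧ μ A = θ * ∑ I ∈ u, μ I ∧ ∀ I ∈ u, θ * μ I ≤ μ (A ∩ I) := by
  classical
  have hpiece (I : Set X) : ∃ B ⊆ I, MeasurableSet B ∧ (I ∈ u → μ B = θ * μ I) := by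
    by_cases hI : I ∈ u
    · obtain ⟨B, hBI, hB, hμB⟩ :=
        hna.exists_subset_measure_eq (hum I hI) (mul_le_of_le_one_left zero_le hθ)
      exact ⟨B, hBI, hB, fun _ => hμB⟩
    · exact ⟨∅, empty_subset I, .empty, fun h => absurd h hI⟩
  choose B hBI hB hμB using hpiece
  refine ⟨⋃ I ∈ u, B I, u.measurableSet_biUnion fun I _ => hB I, ?_, fun I hI => ?_⟩
  · rw [measure_biUnion_finset₀ (fun I hI J hJ hIJ => (hud hI hJ hIJ).mono (hBI I) (hBI J))
      fun I _ => (hB I).nullMeasurableSet, Finset.mul_sum]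
    exact Finset.sum_congr rfl fun I hI => hμB I hI
  · calc θ * μ I = μ (B I) := (hμB I hI).symm
      _ ≤ μ ((⋃ J ∈ u, B J) ∩ I) :=
        measure_mono (subset_inter (subset_biUnion_of_mem (u := B) hI) (hBI I))

end Nonatomic

lemma Finset.exists_subset_le_sum_lt_add {ι : Type*} (s : Finset ι) (w : ι → ℝ≥0∞) {δ : ℝ≥0∞}
    (hδ : 0 < δ) (hw : ∀ i ∈ s, w i < δ) {t : ℝ≥0∞} (ht : t ≤ ∑ i ∈ s, w i) :
    ∃ u ⊆ s, t ≤ ∑ i ∈ u, w i ∧ ∑ i ∈ u, w i < t + δ := by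
  classical
  induction s using Finset.induction_on generalizing t with
  | empty => exact ⟨∅, subset_rfl, ht, by simpa using hδ.trans_le le_add_self⟩
  | insert i s hi ih =>
    by_cases hts : t ≤ ∑ j ∈ s, w j
    · obtain ⟨u, hus, h⟩ := ih (fun j hj => hw j (mem_insert_of_mem hj)) hts
      exact ⟨u, hus.trans (subset_insert i s), h⟩
    · refine ⟨insert i s, subset_rfl, ht, ?_⟩
      rw [sum_insert hi, add_comm t]
      exact ENNReal.add_lt_add (hw i (mem_insert_self i s)) (not_le.mp hts)

lemma mul_measure_sUnion_le_setLIntegral {X : Type*} [MeasurableSpace X] {μ : Measure X}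
    {S : Set (Set X)} (hS : S.Countable) (hSm : ∀ I ∈ S, MeasurableSet I)
    (hSd : S.Pairwise (AEDisjoint μ)) {g : X → ℝ≥0∞} {c : ℝ≥0∞}
    (hc : ∀ I ∈ S, c * μ I ≤ ∫⁻ x in I, g x ∂μ) :
    c * μ (⋃₀ S) ≤ ∫⁻ x in ⋃₀ S, g x ∂μ := by
  have hSn : ∀ I ∈ S, NullMeasurableSet I μ := fun I hI => (hSm I hI).nullMeasurableSet
  rw [sUnion_eq_biUnion, measure_biUnion₀ hS hSd hSn, lintegral_biUnion₀ hS hSn hSd,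
    ← ENNReal.tsum_mul_left]
  exact ENNReal.tsum_le_tsum fun I => hc I I.2

lemma ENNReal.rpow_neg_one_add_mul_mul {x : ℝ≥0∞} (hx₀ : x ≠ 0) (hx : x ≠ ⊤) (c : ℝ≥0∞)
    (e : ℝ) : x ^ (-1 + e) * (c * x) = c * x ^ e := by
  rw [ENNReal.rpow_add _ _ hx₀ hx, ENNReal.rpow_neg_one,
    show x⁻¹ * x ^ e * (c * x) = x⁻¹ * x * (c * x ^ e) by ring, ENNReal.inv_mul_cancel hx₀ hx,
    one_mul]

section Norms

variable {X : Type*} [MeasurableSpace X] {μ : Measure X} {p : ℝ}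

lemma mul_measure_rpow_le_tripleNorm (hp : 0 < p) {φ : X → ℝ} {U : Set X}
    (hU : MeasurableSet U) (hU_top : μ U ≠ ⊤) {c : ℝ≥0∞}
    (hc : c * μ U ≤ ∫⁻ x in U, ENNReal.ofReal |φ x| ∂μ) :
    c * μ U ^ (1 / p) ≤ tripleNorm μ p φ := by
  rcases eq_or_ne (μ U) 0 with hU₀ | hU₀
  · simp [hU₀, ENNReal.zero_rpow_of_pos (inv_pos.mpr hp)]
  calc c * μ U ^ (1 / p) = μ U ^ (-1 + 1 / p) * (c * μ U) :=
        (ENNReal.rpow_neg_one_add_mul_mul hU₀ hU_top c _).symm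
    _ ≤ μ U ^ (-1 + 1 / p) * ∫⁻ x in U, ENNReal.ofReal |φ x| ∂μ := mul_le_mul_right hc _
    _ ≤ tripleNorm μ p φ :=
        le_iSup_of_le U (le_iSup_of_le hU (le_iSup_of_le (pos_iff_ne_zero.mpr hU₀) le_rfl))

lemma mul_measure_rpow_le_weakNormE (hp : 0 < p) {g : X → ℝ≥0∞} {U : Set X} {v : ℝ}
    (hU : ∀ x ∈ U, ENNReal.ofReal v ≤ g x) :
    ENNReal.ofReal v * μ U ^ (1 / p) ≤ weakNormE μ p g := by
  refine ENNReal.mul_le_of_forall_lt fun a ha b hb => ?_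
  rcases eq_or_ne a 0 with rfl | ha₀
  · simp
  have hl : 0 < a.toReal := ENNReal.toReal_pos ha₀ ha.ne_top
  have hsub : U ⊆ {x | ENNReal.ofReal a.toReal < g x} := fun x hx =>
    (ENNReal.ofReal_toReal ha.ne_top ▸ ha).trans_le (hU x hx)
  calc a * b = ENNReal.ofReal a.toReal * b := by rw [ENNReal.ofReal_toReal ha.ne_top]
    _ ≤ ENNReal.ofReal a.toReal * μ {x | ENNReal.ofReal a.toReal < g x} ^ (1 / p) :=
        mul_le_mul_right
          (hb.le.trans (ENNReal.rpow_le_rpow (measure_mono hsub) (one_div_pos.mpr hp).le)) _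
    _ ≤ weakNormE μ p g := le_iSup₂_of_le a.toReal hl le_rfl

end Norms

section Indicator

variable {X : Type*} [MeasurableSpace X] {μ : Measure X} {A : Set X} {c : ℝ}

lemma setLIntegral_ofReal_abs_indicator_const (hA : MeasurableSet A) (hc : 0 ≤ c) (E : Set X) :
    ∫⁻ x in E, ENNReal.ofReal |A.indicator (fun _ => c) x| ∂μ = ENNReal.ofReal c * μ (A ∩ E) := by
  have habs : (fun x => ENNReal.ofReal |A.indicator (fun _ => c) x|) =
      A.indicator fun _ => ENNReal.ofReal c := by
    ext x
    by_cases hx : x ∈ A <;> simp [hx, abs_of_nonneg hc]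
  rw [habs, lintegral_indicator hA, setLIntegral_const, Measure.restrict_apply hA]

lemma tripleNorm_indicator_const [IsFiniteMeasure μ] {p : ℝ} (hp : 1 ≤ p)
    (hA : MeasurableSet A) (hc : 0 ≤ c) :
    tripleNorm μ p (A.indicator fun _ => c) = ENNReal.ofReal c * μ A ^ (1 / p) := by
  have hp₀ : 0 < p := zero_lt_one.trans_le hp
  refine le_antisymm (iSup₂_le fun E _ => iSup_le fun _ => ?_)
    (mul_measure_rpow_le_tripleNorm hp₀ hA (measure_ne_top μ A)
      (by rw [setLIntegral_ofReal_abs_indicator_const hA hc, inter_self]))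
  rw [setLIntegral_ofReal_abs_indicator_const hA hc]
  rcases eq_or_ne (μ (A ∩ E)) 0 with h₀ | h₀
  · simp [h₀]
  have hmono : μ E ^ (-1 + 1 / p) ≤ μ (A ∩ E) ^ (-1 + 1 / p) := by
    have hq : 0 ≤ 1 - 1 / p := sub_nonneg.mpr ((div_le_one hp₀).mpr hp)
    rw [show -1 + 1 / p = -(1 - 1 / p) by ring, ENNReal.rpow_neg, ENNReal.rpow_neg]
    exact ENNReal.inv_le_inv.mpr (ENNReal.rpow_le_rpow (measure_mono inter_subset_right) hq)
  calc μ E ^ (-1 + 1 / p) * (ENNReal.ofReal c * μ (A ∩ E))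
      ≤ μ (A ∩ E) ^ (-1 + 1 / p) * (ENNReal.ofReal c * μ (A ∩ E)) :=
        mul_le_mul_left hmono _
    _ = ENNReal.ofReal c * μ (A ∩ E) ^ (1 / p) :=
        ENNReal.rpow_neg_one_add_mul_mul h₀ (measure_ne_top μ _) _ _
    _ ≤ ENNReal.ofReal c * μ A ^ (1 / p) :=
        mul_le_mul_right (ENNReal.rpow_le_rpow (measure_mono inter_subset_left)
          (one_div_pos.mpr hp₀).le) _

end Indicator

namespace TreeOn

variable {X : Type*} [MeasurableSpace X] {μ : Measure X} (T : TreeOn X μ)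

lemma mem_level_succ {J : Set X} {m : ℕ} :
    J ∈ T.level (m + 1) ↔ ∃ I ∈ T.level m, J ∈ T.child I := by
  simp [T.level_succ m]

lemma mem_carrier_iff {I : Set X} : I ∈ T.carrier ↔ ∃ m, I ∈ T.level m := by
  rw [T.carrier_eq, mem_iUnion]

lemma level_subset_carrier (m : ℕ) : T.level m ⊆ T.carrier :=
  fun _ hI => T.mem_carrier_iff.mpr ⟨m, hI⟩

lemma level_finite (m : ℕ) : (T.level m).Finite := by
  induction m with
  | zero => simp [T.level_zero]
  | succ m ih =>
    rw [T.level_succ m]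
    exact ih.biUnion fun I hI => T.child_finite I (T.level_subset_carrier m hI)

lemma carrier_countable : T.carrier.Countable := by
  rw [T.carrier_eq]
  exact countable_iUnion fun m => (T.level_finite m).countable

lemma sUnion_level (m : ℕ) : ⋃₀ T.level m = univ := by
  induction m with
  | zero => simp [T.level_zero]
  | succ m ih =>
    rw [T.level_succ m, sUnion_iUnion, ← ih, sUnion_eq_biUnion]
    refine iUnion_congr fun I => ?_
    rw [sUnion_iUnion]
    exact iUnion_congr fun hI => T.child_union I (T.level_subset_carrier m hI)

lemma exists_ancestor {m n : ℕ} (hmn : m ≤ n) {J : Set X} (hJ : J ∈ T.level n) :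
    ∃ I ∈ T.level m, J ⊆ I := by
  induction n, hmn using Nat.le_induction generalizing J with
  | base => exact ⟨J, hJ, subset_rfl⟩
  | succ n _ ih =>
    obtain ⟨K, hK, hJK⟩ := T.mem_level_succ.mp hJ
    obtain ⟨I, hI, hKI⟩ := ih hK
    exact ⟨I, hI, (T.child_sub K (T.level_subset_carrier n hK) J hJK).trans hKI⟩

lemma level_pairwise_aedisjoint (m : ℕ) : (T.level m).Pairwise (AEDisjoint μ) := by
  induction m with
  | zero => simp [T.level_zero]
  | succ m ih =>
    intro I hI J hJ hIJ
    obtain ⟨I₀, hI₀, hII₀⟩ := T.mem_level_succ.mp hI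
    obtain ⟨J₀, hJ₀, hJJ₀⟩ := T.mem_level_succ.mp hJ
    rcases eq_or_ne I₀ J₀ with rfl | hne
    · exact T.child_almost_disjoint I₀ (T.level_subset_carrier m hI₀) I hII₀ J hJJ₀ hIJ
    · exact (ih hI₀ hJ₀ hne).mono (T.child_sub I₀ (T.level_subset_carrier m hI₀) I hII₀)
        (T.child_sub J₀ (T.level_subset_carrier m hJ₀) J hJJ₀)

lemma subset_or_aedisjoint {m n : ℕ} (hmn : m ≤ n) {I J : Set X} (hI : I ∈ T.level m)
    (hJ : J ∈ T.level n) : J ⊆ I ∨ AEDisjoint μ I J := by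
  obtain ⟨K, hK, hJK⟩ := T.exists_ancestor hmn hJ
  rcases eq_or_ne I K with rfl | hne
  · exact Or.inl hJK
  · exact Or.inr ((T.level_pairwise_aedisjoint m hI hK hne).mono subset_rfl hJK)

lemma not_aedisjoint_of_subset {I J : Set X} (hI : I ∈ T.carrier) (hIJ : I ⊆ J) :
    ¬AEDisjoint μ I J := by
  rw [AEDisjoint, inter_eq_self_of_subset_left hIJ]
  exact (T.pos I hI).ne'

/-- Maximal elements exist because a strict superset in the tree lies on a strictly lower level:
a superset on the lowest possible level is maximal. -/
lemma exists_subset_maximal {𝓘 : Set (Set X)} (h𝓘 : 𝓘 ⊆ T.carrier) {I : Set X} (hI : I ∈ 𝓘) :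
    ∃ K, I ⊆ K ∧ Maximal (· ∈ 𝓘) K := by
  classical
  have hex : ∃ n, ∃ K ∈ 𝓘, I ⊆ K ∧ K ∈ T.level n := by
    obtain ⟨n, hn⟩ := T.mem_carrier_iff.mp (h𝓘 hI)
    exact ⟨n, I, hI, subset_rfl, hn⟩
  obtain ⟨K, hK, hIK, hKn⟩ := Nat.find_spec hex
  refine ⟨K, hIK, hK, fun J hJ hKJ => ?_⟩
  obtain ⟨n, hJn⟩ := T.mem_carrier_iff.mp (h𝓘 hJ)
  have hn : Nat.find hex ≤ n := Nat.find_min' hex ⟨J, hJ, hIK.trans hKJ, hJn⟩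
  exact (T.subset_or_aedisjoint hn hKn hJn).resolve_right
    (T.not_aedisjoint_of_subset (h𝓘 hK) hKJ)

lemma pairwise_aedisjoint_maximal {𝓘 : Set (Set X)} (h𝓘 : 𝓘 ⊆ T.carrier) :
    {K | Maximal (· ∈ 𝓘) K}.Pairwise (AEDisjoint μ) := by
  intro I hI J hJ hIJ
  obtain ⟨m, hIm⟩ := T.mem_carrier_iff.mp (h𝓘 hI.prop)
  obtain ⟨n, hJn⟩ := T.mem_carrier_iff.mp (h𝓘 hJ.prop)
  rcases le_total m n with hmn | hnm
  · exact (T.subset_or_aedisjoint hmn hIm hJn).resolve_left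
      fun hJI => hIJ (hJ.eq_of_subset hI.prop hJI).symm
  · exact ((T.subset_or_aedisjoint hnm hJn hIm).resolve_left
      fun hIJ' => hIJ (hI.eq_of_subset hJ.prop hIJ')).symm

lemma sum_measure_level (m : ℕ) : ∑ I ∈ (T.level_finite m).toFinset, μ I = μ univ := by
  rw [← measure_biUnion_finset₀ (by simpa using T.level_pairwise_aedisjoint m)
    fun I hI => (T.meas I (T.level_subset_carrier m ((T.level_finite m).mem_toFinset.mp hI)))
      |>.nullMeasurableSet]
  simp [← sUnion_eq_biUnion, T.sUnion_level m]

lemma exists_finset_level_sum_measure_mem_Ico {x y : ℝ≥0∞} (hx : x ≤ μ univ) (hxy : x < y) :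
    ∃ m, ∃ u : Finset (Set X), ↑u ⊆ T.level m ∧ x ≤ ∑ I ∈ u, μ I ∧ ∑ I ∈ u, μ I < y := by
  have hδ : 0 < y - x := tsub_pos_of_lt hxy
  obtain ⟨m, hm⟩ := (T.level_tendsto.eventually_lt_const hδ).exists
  obtain ⟨u, hu, hxu, huy⟩ := Finset.exists_subset_le_sum_lt_add _ (fun I => μ I) hδ
    (fun I hI => (le_biSup (fun I => μ I) ((T.level_finite m).mem_toFinset.mp hI)).trans_lt hm)
    (hx.trans_eq (T.sum_measure_level m).symm)
  refine ⟨m, u, fun I hI => (T.level_finite m).mem_toFinset.mp (hu hI), hxu, ?_⟩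
  rwa [add_tsub_cancel_of_le hxy.le] at huy

lemma setLIntegral_div_le_maxT (φ : X → ℝ) {I : Set X} (hI : I ∈ T.carrier) {x : X}
    (hx : x ∈ I) : (∫⁻ y in I, ENNReal.ofReal |φ y| ∂μ) / μ I ≤ maxT μ T φ x :=
  le_iSup_of_le I (le_iSup_of_le hI (le_iSup_of_le hx le_rfl))

theorem weakNormE_maxT_le_tripleNorm [IsFiniteMeasure μ] {p : ℝ} (hp : 0 < p) (φ : X → ℝ) :
    weakNormE μ p (maxT μ T φ) ≤ tripleNorm μ p φ := by
  refine iSup₂_le fun l _ => ?_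
  set 𝓘 := {I | I ∈ T.carrier ∧ ENNReal.ofReal l * μ I < ∫⁻ x in I, ENNReal.ofReal |φ x| ∂μ}
  have h𝓘 : 𝓘 ⊆ T.carrier := fun I hI => hI.1
  set S := {K | Maximal (· ∈ 𝓘) K}
  have hS : S.Countable := T.carrier_countable.mono fun K hK => h𝓘 hK.prop
  have hSm : ∀ K ∈ S, MeasurableSet K := fun K hK => T.meas K (h𝓘 hK.prop)
  have hcover : {x | ENNReal.ofReal l < maxT μ T φ x} ⊆ ⋃₀ S := by
    intro x hx
    simp only [mem_ofPred_eq, maxT, lt_iSup_iff] at hx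
    obtain ⟨I, hI, hxI, hlt⟩ := hx
    have hI𝓘 : I ∈ 𝓘 := ⟨hI, (ENNReal.lt_div_iff_mul_lt (Or.inl (T.pos I hI).ne')
      (Or.inl (measure_ne_top μ I))).mp hlt⟩
    obtain ⟨K, hIK, hK⟩ := T.exists_subset_maximal h𝓘 hI𝓘
    exact ⟨K, hK, hIK hxI⟩
  calc ENNReal.ofReal l * μ {x | ENNReal.ofReal l < maxT μ T φ x} ^ (1 / p)
      ≤ ENNReal.ofReal l * μ (⋃₀ S) ^ (1 / p) :=
        mul_le_mul_right (ENNReal.rpow_le_rpow (measure_mono hcover) (one_div_pos.mpr hp).le) _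
    _ ≤ tripleNorm μ p φ :=
        mul_measure_rpow_le_tripleNorm hp (.sUnion hS hSm) (measure_ne_top μ _)
          (mul_measure_sUnion_le_setLIntegral hS hSm (T.pairwise_aedisjoint_maximal h𝓘)
            fun K hK => hK.prop.2.le)

variable [IsProbabilityMeasure μ]

/-- `A` takes the same proportion `a / s` of every element of a finite family on a deep level
whose union `U` has measure `s ∈ [a, b)`, so the averages of its indicator over these elements
are at least `c a / s`. -/
lemma exists_measure_eq_and_le_maxT_indicator (hna : Nonatomic μ) {a b c : ℝ} (ha : 0 < a)
    (ha₁ : a ≤ 1) (hab : a < b) (hc : 0 ≤ c) :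
    ∃ A U : Set X, ∃ s : ℝ, MeasurableSet A ∧ μ A = ENNReal.ofReal a ∧ 0 < s ∧ s < b ∧
      μ U = ENNReal.ofReal s ∧
      ∀ x ∈ U, ENNReal.ofReal (c * a / s) ≤ maxT μ T (A.indicator fun _ => c) x := by
  obtain ⟨m, u, hu, has, hsb⟩ := T.exists_finset_level_sum_measure_mem_Ico
    (by rw [measure_univ]; exact ENNReal.ofReal_le_one.mpr ha₁)
    ((ENNReal.ofReal_lt_ofReal_iff (ha.trans hab)).mpr hab)
  have hum : ∀ I ∈ u, I ∈ T.carrier := fun I hI => T.level_subset_carrier m (hu hI)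
  have hud : (u : Set (Set X)).Pairwise (AEDisjoint μ) := (T.level_pairwise_aedisjoint m).mono hu
  set s := (∑ I ∈ u, μ I).toReal
  have hσ : ∑ I ∈ u, μ I = ENNReal.ofReal s :=
    (ENNReal.ofReal_toReal (hsb.trans ofReal_lt_top).ne).symm
  rw [hσ, ENNReal.ofReal_le_ofReal_iff ENNReal.toReal_nonneg] at has
  rw [hσ, ENNReal.ofReal_lt_ofReal_iff (ha.trans hab)] at hsb
  have hs : 0 < s := ha.trans_le has
  obtain ⟨A, hA, hμA, hAI⟩ := hna.exists_measure_inter_ge_mul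
    (fun I hI => T.meas I (hum I hI)) hud (ENNReal.ofReal_le_one.mpr ((div_le_one hs).mpr has))
  refine ⟨A, ⋃ I ∈ u, I, s, hA, ?_, hs, hsb, ?_, ?_⟩
  · rw [hμA, hσ, ← ENNReal.ofReal_mul (div_pos ha hs).le, div_mul_cancel₀ a hs.ne']
  · rw [measure_biUnion_finset₀ hud fun I hI => (T.meas I (hum I hI)).nullMeasurableSet, hσ]
  · simp only [mem_iUnion₂, exists_prop]
    rintro x ⟨I, hI, hxI⟩
    refine le_trans ?_ (T.setLIntegral_div_le_maxT _ (hum I hI) hxI)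
    rw [setLIntegral_ofReal_abs_indicator_const hA hc, ENNReal.le_div_iff_mul_le
      (Or.inl (T.pos I (hum I hI)).ne') (Or.inl (measure_ne_top μ I)), mul_div_assoc,
      ENNReal.ofReal_mul hc, mul_assoc]
    exact mul_le_mul_right (hAI I hI) _

theorem exists_lt_weakNormE_maxT (hna : Nonatomic μ) {p f F r : ℝ} (hp : 1 < p) (hf : 0 < f)
    (hfF : f ≤ F) (hr : 0 < r) (hrF : r < F) :
    ∃ φ : X → ℝ, Measurable φ ∧ (∀ x, 0 ≤ φ x) ∧
      ∫⁻ x, ENNReal.ofReal (φ x) ∂μ = ENNReal.ofReal f ∧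
      tripleNorm μ p φ = ENNReal.ofReal F ∧ ENNReal.ofReal r < weakNormE μ p (maxT μ T φ) := by
  have hp₀ : 0 < p := one_pos.trans hp
  set q := 1 - 1 / p
  have hq : 0 < q := sub_pos.mpr ((div_lt_one hp₀).mpr hp)
  have hrpow (x : ℝ) (hx : 0 < x) : x ^ (1 / p) = x / x ^ q := by
    rw [Real.rpow_sub hx, Real.rpow_one, div_div_cancel₀ hx.ne']
  have hF : 0 < F := hf.trans_le hfF
  set a := (f / F) ^ q⁻¹
  have ha : 0 < a := by positivity
  have haq : a ^ q = f / F := Real.rpow_inv_rpow (by positivity) hq.ne'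
  obtain ⟨A, U, s, hA, hμA, hs, hsb, hμU, hU⟩ := T.exists_measure_eq_and_le_maxT_indicator hna ha
    (Real.rpow_le_one (by positivity) ((div_le_one hF).mpr hfF) (inv_pos.mpr hq).le)
    (Real.rpow_lt_rpow (by positivity) (div_lt_div_of_pos_left hf hr hrF) (inv_pos.mpr hq))
    (div_pos hf ha).le
  have hc : 0 ≤ f / a := (div_pos hf ha).le
  have hφ₀ (x : X) : 0 ≤ A.indicator (fun _ => f / a) x := indicator_nonneg (fun _ _ => hc) x
  have hsq : s ^ q < f / r := by
    simpa [Real.rpow_inv_rpow (div_pos hf hr).le hq.ne'] using Real.rpow_lt_rpow hs.le hsb hq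
  refine ⟨A.indicator fun _ => f / a, measurable_const.indicator hA, hφ₀, ?_, ?_, ?_⟩
  · calc ∫⁻ x, ENNReal.ofReal (A.indicator (fun _ => f / a) x) ∂μ
        = ∫⁻ x in univ, ENNReal.ofReal |A.indicator (fun _ => f / a) x| ∂μ := by
          simp_rw [Measure.restrict_univ, abs_of_nonneg (hφ₀ _)]
      _ = ENNReal.ofReal f := by
          rw [setLIntegral_ofReal_abs_indicator_const hA hc, inter_univ, hμA,
            ← ENNReal.ofReal_mul hc, div_mul_cancel₀ f ha.ne']
  · rw [tripleNorm_indicator_const hp.le hA hc, hμA, ENNReal.ofReal_rpow_of_pos ha,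
      ← ENNReal.ofReal_mul hc, hrpow a ha, haq]
    congr 1
    field_simp
  · calc ENNReal.ofReal r < ENNReal.ofReal (f / s ^ q) :=
          (ENNReal.ofReal_lt_ofReal_iff (by positivity)).mpr
            ((lt_div_iff₀ (by positivity)).mpr ((lt_div_iff₀' hr).mp hsq))
      _ = ENNReal.ofReal (f / a * a / s) * μ U ^ (1 / p) := by
          rw [hμU, ENNReal.ofReal_rpow_of_pos hs, ← ENNReal.ofReal_mul (by positivity),
            hrpow s hs]
          congr 1
          field_simp
      _ ≤ weakNormE μ p (maxT μ T (A.indicator fun _ => f / a)) :=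
          mul_measure_rpow_le_weakNormE hp₀ hU

end TreeOn

/-- Corollary 3.2: `sup { ‖M_T φ‖_{p,∞} : φ ≥ 0, ∫ φ = f, |||φ|||_{p,∞} = F } = F`. -/
theorem stmt4 {X : Type*} [MeasurableSpace X] (μ : MeasureTheory.Measure X)
    [IsProbabilityMeasure μ] (hna : Nonatomic μ) (T : TreeOn X μ)
    (p : ℝ) (hp : 1 < p) (f F : ℝ) (hf : 0 < f) (hfF : f ≤ F) :
    sSup {m : ℝ≥0∞ | ∃ φ : X → ℝ, Measurable φ ∧ (∀ x, 0 ≤ φ x) ∧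
        (∫⁻ x, ENNReal.ofReal (φ x) ∂μ) = ENNReal.ofReal f ∧
        tripleNorm μ p φ = ENNReal.ofReal F ∧
        m = weakNormE μ p (maxT μ T φ)} = ENNReal.ofReal F := by
  refine le_antisymm (sSup_le ?_) (le_of_forall_lt fun x hx => ?_)
  · rintro _ ⟨φ, -, -, -, hφ, rfl⟩
    exact hφ ▸ T.weakNormE_maxT_le_tripleNorm (one_pos.trans hp) φ
  · obtain ⟨r, -, hxr, hrF⟩ := ENNReal.lt_iff_exists_real_btwn.mp hx
    obtain ⟨φ, hφm, hφ₀, hφf, hφF, hφr⟩ := T.exists_lt_weakNormE_maxT hna hp hf hfF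
      (ENNReal.ofReal_pos.mp (zero_le.trans_lt hxr))
      ((ENNReal.ofReal_lt_ofReal_iff (hf.trans_le hfF)).mp hrF)
    exact lt_sSup_iff.mpr ⟨_, ⟨φ, hφm, hφ₀, hφf, hφF, rfl⟩, hxr.trans hφr⟩
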